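/- For the three-player Nim game consisting of n heaps each of size 1 (with players moving cyclically and the player making the last move winning), the game is a P-game (third/Previous player wins) if n ≡ 0 mod 3, an N-game (Next player wins) if n ≡ 1 mod 3, and an O-game (Other/second player wins) if n ≡ 2 mod 3. -/
import Mathlib


/-- Three-player impartial games: well-founded game trees. -/
inductive G3 : Type 1 where
  | mk : (ι : Type) → (ι → G3) → G3

namespace G3

/-- The index type of options (moves) of a game. -/
def moves : G3 → Type
  | mk ι _ => ι

/-- The option of a game corresponding to a move. -/
def moveFn : (g : G3) → moves g → G3
  | mk _ f => f

/-- Disjunctive sum: move in exactly one component. -/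
noncomputable def add : G3 → G3 → G3 :=
  G3.rec (fun ι f ihf =>
    G3.rec (fun κ g ihg =>
      mk (ι ⊕ κ) (fun x =>
        match x with
        | Sum.inl i => ihf i (mk κ g)
        | Sum.inr j => ihg j)))

/-- The four outcome types of a three-player impartial game. -/
inductive PType : Type
  | N | O | P | Q
deriving DecidableEq

open Classical in
/-- The type of a game: `N` iff some option is a `P`-game; `O` iff it has at least
one option and all options are `N`-games; `P` iff all options are `O`-games;
`Q` otherwise. -/
noncomputable def typ : G3 → PType
  | mk ι f =>
    if ∃ i, typ (f i) = PType.P then PType.N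
    else if Nonempty ι ∧ ∀ i, typ (f i) = PType.N then PType.O
    else if ∀ i, typ (f i) = PType.O then PType.P
    else PType.Q

/-- The Nim heap of size `n`: options are heaps of sizes `0, …, n-1`. -/
def nim : ℕ → G3
  | n => mk (Fin n) (fun i => nim i)
termination_by n => n
decreasing_by exact i.isLt

/-- The sum of `n` Nim heaps of size 1. -/
noncomputable def ones : ℕ → G3
  | 0 => nim 0
  | n + 1 => add (ones n) (nim 1)

theorem add_def (ι κ : Type) (f : ι → G3) (g : κ → G3) :
    add (mk ι f) (mk κ g) = mk (ι ⊕ κ)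
      (Sum.elim (fun i => add (f i) (mk κ g)) (fun j => add (mk ι f) (g j))) :=
  congrArg (mk (ι ⊕ κ)) (funext fun x => by cases x <;> rfl)

open Classical in
theorem typ_def (ι : Type) (f : ι → G3) :
    typ (mk ι f) =
      if ∃ i, typ (f i) = PType.P then PType.N
      else if Nonempty ι ∧ ∀ i, typ (f i) = PType.N then PType.O
      else if ∀ i, typ (f i) = PType.O then PType.P
      else PType.Q := by
  rw [typ]

/-- Bisimilarity of games. -/
inductive Bisim : G3 → G3 → Prop
  | mk : ∀ (ι κ : Type) (f : ι → G3) (g : κ → G3) (φ : ι → κ) (ψ : κ → ι),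
      (∀ i, Bisim (f i) (g (φ i))) → (∀ j, Bisim (f (ψ j)) (g j)) →
      Bisim (mk ι f) (mk κ g)

theorem Bisim.refl : ∀ g : G3, Bisim g g := by
  intro g
  induction g with
  | mk ι f ih => exact Bisim.mk ι ι f f id id ih ih

theorem typ_eq_of_bisim : ∀ {g h : G3}, Bisim g h → typ g = typ h := by
  classical
  intro g h hb
  induction hb with
  | mk ι κ f g φ ψ hf hg ihf ihg =>
    have e1 : (∃ i, typ (f i) = PType.P) ↔ (∃ j, typ (g j) = PType.P) := by
      constructor
      · rintro ⟨i, hi⟩; exact ⟨φ i, by rw [← ihf i]; exact hi⟩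
      · rintro ⟨j, hj⟩; exact ⟨ψ j, by rw [ihg j]; exact hj⟩
    have e2 : (Nonempty ι ∧ ∀ i, typ (f i) = PType.N)
        ↔ (Nonempty κ ∧ ∀ j, typ (g j) = PType.N) := by
      constructor
      · rintro ⟨⟨i⟩, h⟩; exact ⟨⟨φ i⟩, fun j => by rw [← ihg j]; exact h _⟩
      · rintro ⟨⟨j⟩, h⟩; exact ⟨⟨ψ j⟩, fun i => by rw [ihf i]; exact h _⟩
    have e3 : (∀ i, typ (f i) = PType.O) ↔ (∀ j, typ (g j) = PType.O) := by
      constructor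
      · intro h j; rw [← ihg j]; exact h _
      · intro h i; rw [ihf i]; exact h _
    rw [typ_def, typ_def]
    exact if_congr e1 rfl (if_congr e2 rfl (if_congr e3 rfl rfl))

theorem bisim_add : ∀ {a b : G3}, Bisim a b → ∀ {c d : G3}, Bisim c d →
    Bisim (add a c) (add b d) := by
  intro a b h1
  induction h1 with
  | mk ι κ f g φ ψ hf hg ihf ihg =>
    intro c d h2
    induction h2 with
    | mk ι' κ' f' g' φ' ψ' hf' hg' ihf' ihg' =>
      rw [add_def, add_def]
      refine Bisim.mk _ _ _ _ (Sum.map φ φ') (Sum.map ψ ψ') ?_ ?_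
      · rintro (i | i')
        · exact ihf i (Bisim.mk _ _ _ _ φ' ψ' hf' hg')
        · exact ihf' i'
      · rintro (j | j')
        · exact ihg j (Bisim.mk _ _ _ _ φ' ψ' hf' hg')
        · exact ihg' j'

theorem nim_zero : nim 0 = mk (Fin 0) (fun i => nim i) := by rw [nim]
theorem nim_one : nim 1 = mk (Fin 1) (fun i => nim i) := by rw [nim]

theorem bisim_add_nim0 : ∀ g : G3, Bisim (add g (nim 0)) g := by
  intro g
  induction g with
  | mk ι f ih =>
    rw [nim_zero, add_def]
    refine Bisim.mk _ _ _ _ (Sum.elim id Fin.elim0) Sum.inl ?_ ?_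
    · rintro (i | j)
      · simp only [Sum.elim_inl, id]
        rw [← nim_zero]
        exact ih i
      · exact j.elim0
    · intro j
      simp only [Sum.elim_inl]
      rw [← nim_zero]
      exact ih j

theorem ones_opt (n : ℕ) : ∃ (ι : Type) (f : ι → G3),
    Nonempty ι ∧ ones (n + 1) = mk ι f ∧ ∀ i, Bisim (f i) (ones n) := by
  induction n with
  | zero =>
    refine ⟨Fin 0 ⊕ Fin 1,
      Sum.elim (fun i => add (nim (i : ℕ)) (mk (Fin 1) fun j => nim (j : ℕ)))
        (fun j => add (mk (Fin 0) fun i => nim (i : ℕ)) (nim (j : ℕ))),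
      ⟨Sum.inr 0⟩, ?_, ?_⟩
    · show ones 1 = _
      rw [ones, ones, nim_zero, nim_one, add_def]
    · rintro (i | j)
      · exact i.elim0
      · simp only [Sum.elim_inr]
        have hj : (j : ℕ) = 0 := by omega
        rw [hj, ← nim_zero]
        exact bisim_add_nim0 _
  | succ n ih =>
    obtain ⟨ι, f, hne, heq, hb⟩ := ih
    refine ⟨ι ⊕ Fin 1,
      Sum.elim (fun i => add (f i) (mk (Fin 1) fun j => nim (j : ℕ)))
        (fun j => add (mk ι f) (nim (j : ℕ))),
      ⟨Sum.inr 0⟩, ?_, ?_⟩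
    · show ones (n + 2) = _
      rw [ones, heq, nim_one, add_def]
    · rintro (i | j)
      · simp only [Sum.elim_inl]
        rw [← nim_one, show ones (n + 1) = add (ones n) (nim 1) from rfl]
        exact bisim_add (hb i) (Bisim.refl _)
      · simp only [Sum.elim_inr]
        have hj : (j : ℕ) = 0 := by omega
        rw [hj, ← heq]
        exact bisim_add_nim0 _

/-- One step of the outcome cycle. -/
def step : PType → PType
  | PType.P => PType.N
  | PType.N => PType.O
  | PType.O => PType.P
  | PType.Q => PType.Q

theorem typ_ones_succ (n : ℕ) : typ (ones (n + 1)) = step (typ (ones n)) := by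
  obtain ⟨ι, f, hne, heq, hb⟩ := ones_opt n
  have ht : ∀ i, typ (f i) = typ (ones n) := fun i => typ_eq_of_bisim (hb i)
  obtain ⟨i0⟩ := hne
  rw [heq, typ_def]
  cases h : typ (ones n) with
  | N =>
    rw [if_neg (by rintro ⟨i, hi⟩; rw [ht i, h] at hi; cases hi),
        if_pos ⟨⟨i0⟩, fun i => by rw [ht i, h]⟩]
    rfl
  | O =>
    rw [if_neg (by rintro ⟨i, hi⟩; rw [ht i, h] at hi; cases hi),
        if_neg (by rintro ⟨_, hall⟩; have := hall i0; rw [ht i0, h] at this; cases this),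
        if_pos (fun i => by rw [ht i, h])]
    rfl
  | P =>
    rw [if_pos ⟨i0, by rw [ht i0, h]⟩]
    rfl
  | Q =>
    rw [if_neg (by rintro ⟨i, hi⟩; rw [ht i, h] at hi; cases hi),
        if_neg (by rintro ⟨_, hall⟩; have := hall i0; rw [ht i0, h] at this; cases this),
        if_neg (by intro hall; have := hall i0; rw [ht i0, h] at this; cases this)]
    rfl

theorem typ_ones_zero : typ (ones 0) = PType.P := by
  show typ (nim 0) = PType.P
  rw [nim_zero, typ_def, if_neg (by rintro ⟨i, _⟩; exact i.elim0),
      if_neg (by rintro ⟨⟨i⟩, _⟩; exact i.elim0), if_pos (fun i => i.elim0)]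

theorem typ_ones (n : ℕ) : typ (ones n) =
    (if n % 3 = 0 then PType.P else if n % 3 = 1 then PType.N else PType.O) := by
  induction n with
  | zero => simpa using typ_ones_zero
  | succ n ih =>
    rw [typ_ones_succ, ih]
    have h3 : n % 3 = 0 ∨ n % 3 = 1 ∨ n % 3 = 2 := by omega
    rcases h3 with h | h | h
    · have h' : (n + 1) % 3 = 1 := by omega
      simp [h, h', step]
    · have h' : (n + 1) % 3 = 2 := by omega
      simp [h, h', step]
    · have h' : (n + 1) % 3 = 0 := by omega
      simp [h, h', step]

theorem ones_type (n : ℕ) :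
    (n % 3 = 0 → typ (ones n) = PType.P) ∧
    (n % 3 = 1 → typ (ones n) = PType.N) ∧
    (n % 3 = 2 → typ (ones n) = PType.O) := by
  refine ⟨fun h => ?_, fun h => ?_, fun h => ?_⟩ <;> rw [typ_ones] <;> simp [h]

end G3
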